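/- Let $n,m\geq 1$; let $a_1,\dots,a_n\in\mathbb{R}^m$, $b\in\mathbb{R}^n$, $c\in\mathbb{R}^m$, $C\in\mathbb{R}$, $\phi_1,\dots,\phi_n\in\mathbb{R}^n$, and parameters $\lambda,\lambda_\theta,\gamma,\varepsilon>0$. For $\alpha\in\mathbb{R}^n$ define $U(\alpha):=\lambda I_n+\sum_{i=1}^n\alpha_i\,\phi_i\phi_i^\top$ and, whenever $U(\alpha)$ is positive definite, define $F(\alpha):=\sum_{i=1}^n\alpha_ib_i+\frac{1}{4\lambda_\theta}\sum_{j=1}^m\big(c_j+\sum_{i=1}^n\alpha_ia_{ij}\big)^2-\varepsilon\log\det U(\alpha)+\frac{1}{4\gamma}\|\alpha\|_2^2+\varepsilon n\log(\varepsilon/e)+C$. Then for every $\alpha\in\mathbb{R}^n$ with $U(\alpha)$ positive definite, and for every symmetric positive definite $B\in\mathbb{R}^{n\times n}$, every $\theta\in\mathbb{R}^m$ and every $\delta\in\mathbb{R}^n$ satisfying $b_i+a_i^\top\theta=\phi_i^\top B\,\phi_i+\delta_i$ for all $i\in\{1,\dots,n\}$, one has $c^\top\theta-\lambda\operatorname{Tr}(B)-\lambda_\theta\|\theta\|_2^2-\gamma\|\delta\|_2^2+\varepsilon\log\det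 B+C\;\leq\;F(\alpha)$. -/

import Mathlib

/-!
Pairing the constraint `bᵢ + aᵢᵀθ = φᵢᵀBφᵢ + δᵢ` with `α` and adding it to the primal objective
decouples `θ`, `δ` and `B`, and each piece is bounded by its concave conjugate: completing the
square in `θ` and in `δ`, and for `B` the bound `ε log det B - tr(U(α) B) ≤ -ε log det U(α) +
ε n log(ε/e)`. The last one is the scalar inequality `ε log t ≤ t + ε log(ε/e)` (i.e.
`log s ≤ s - 1`) summed over the eigenvalues of the positive definite matrix `X B Xᴴ`, where
`U(α) = Xᴴ X`, which has the trace of `U(α) B` and the determinant `det U(α) · det B`.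
-/

open scoped Matrix

open Matrix Finset

theorem Real.mul_log_le_add_mul_log_div_exp {ε x : ℝ} (hε : 0 < ε) (hx : 0 < x) :
    ε * Real.log x ≤ x + ε * Real.log (ε / Real.exp 1) := by
  have h := Real.log_le_sub_one_of_pos (div_pos hx hε)
  rw [Real.log_div hx.ne' hε.ne'] at h
  rw [Real.log_div hε.ne' (Real.exp_ne_zero 1), Real.log_exp]
  have h' : ε * (Real.log x - Real.log ε) ≤ ε * (x / ε - 1) := mul_le_mul_of_nonneg_left h hε.le
  rw [mul_sub, mul_sub, mul_div_cancel₀ x hε.ne', mul_one] at h'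
  linarith

theorem mul_sub_mul_sq_le {p : ℝ} (hp : 0 < p) (x t : ℝ) :
    x * t - p * t ^ 2 ≤ 1 / (4 * p) * x ^ 2 := by
  rw [one_div_mul_eq_div, le_div_iff₀ (by positivity)]
  nlinarith [sq_nonneg (x - 2 * p * t)]

theorem dotProduct_sub_mul_sum_sq_le {ι : Type*} [Fintype ι] {p : ℝ} (hp : 0 < p)
    (x t : ι → ℝ) :
    x ⬝ᵥ t - p * ∑ j, t j ^ 2 ≤ 1 / (4 * p) * ∑ j, x j ^ 2 := by
  simp only [dotProduct, mul_sum, ← sum_sub_distrib]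
  exact sum_le_sum fun j _ => mul_sub_mul_sq_le hp (x j) (t j)

namespace Matrix

variable {n : Type*} [Fintype n]

theorem trace_vecMulVec_mul {R : Type*} [CommSemiring R] (u v : n → R) (B : Matrix n n R) :
    (vecMulVec u v * B).trace = v ⬝ᵥ B *ᵥ u := by
  rw [vecMulVec_mul, trace_vecMulVec, dotProduct_comm, dotProduct_mulVec]

variable [DecidableEq n]

theorem PosDef.mul_log_det_le_trace {M : Matrix n n ℝ} (hM : M.PosDef) {ε : ℝ}
    (hε : 0 < ε) :
    ε * Real.log M.det ≤ M.trace + ε * Fintype.card n * Real.log (ε / Real.exp 1) := by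
  have hpos := hM.eigenvalues_pos
  rw [hM.isHermitian.det_eq_prod_eigenvalues, hM.isHermitian.trace_eq_sum_eigenvalues]
  simp only [RCLike.ofReal_real_eq_id, id]
  rw [Real.log_prod fun i _ => (hpos i).ne', mul_sum]
  calc ∑ i, ε * Real.log (hM.isHermitian.eigenvalues i)
      ≤ ∑ i, (hM.isHermitian.eigenvalues i + ε * Real.log (ε / Real.exp 1)) :=
        sum_le_sum fun i _ => Real.mul_log_le_add_mul_log_div_exp hε (hpos i)
    _ = _ := by rw [sum_add_distrib, sum_const, card_univ, nsmul_eq_mul]; ring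

theorem PosDef.exists_posDef_trace_eq_det_eq_of_mul {U B : Matrix n n ℝ} (hU : U.PosDef)
    (hB : B.PosDef) :
    ∃ M : Matrix n n ℝ, M.PosDef ∧ M.trace = (U * B).trace ∧ M.det = U.det * B.det := by
  open MatrixOrder in
  obtain ⟨X, rfl⟩ := CStarAlgebra.nonneg_iff_eq_star_mul_self.mp hU.posSemidef.nonneg
  have hX : IsUnit X := by
    have := hU.det_pos
    simp only [det_mul, star_eq_conjTranspose, det_conjTranspose] at this
    exact (isUnit_iff_isUnit_det X).mpr (isUnit_iff_ne_zero.mpr fun h => by simp [h] at this)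
  refine ⟨X * B * Xᴴ, hB.mul_mul_conjTranspose_same (vecMul_injective_iff_isUnit.mpr hX), ?_, ?_⟩
  · rw [trace_mul_cycle, star_eq_conjTranspose, mul_assoc]
  · simp only [det_mul, det_conjTranspose, star_eq_conjTranspose]; ring

theorem PosDef.mul_log_det_add_log_det_le_trace_mul {U B : Matrix n n ℝ} (hU : U.PosDef)
    (hB : B.PosDef) {ε : ℝ} (hε : 0 < ε) :
    ε * (Real.log U.det + Real.log B.det)
      ≤ (U * B).trace + ε * Fintype.card n * Real.log (ε / Real.exp 1) := by
  obtain ⟨M, hM, htr, hdet⟩ := hU.exists_posDef_trace_eq_det_eq_of_mul hB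
  rw [← Real.log_mul hU.det_pos.ne' hB.det_pos.ne', ← hdet, ← htr]
  exact hM.mul_log_det_le_trace hε

end Matrix

theorem statement_11_general {n m : ℕ}
    (a : Fin n → Fin m → ℝ) (b : Fin n → ℝ) (c : Fin m → ℝ) (C : ℝ)
    (φ : Fin n → Fin n → ℝ)
    (lam lamθ γ ε : ℝ) (hlamθ : 0 < lamθ) (hγ : 0 < γ) (hε : 0 < ε)
    (U : (Fin n → ℝ) → Matrix (Fin n) (Fin n) ℝ)
    (hU : ∀ α, U α = lam • (1 : Matrix (Fin n) (Fin n) ℝ)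
      + ∑ i, α i • Matrix.vecMulVec (φ i) (φ i))
    (F : (Fin n → ℝ) → ℝ)
    (hF : ∀ α, F α = ∑ i, α i * b i
      + 1 / (4 * lamθ) * ∑ j, (c j + ∑ i, α i * a i j) ^ 2
      - ε * Real.log (U α).det + 1 / (4 * γ) * ∑ i, α i ^ 2
      + ε * n * Real.log (ε / Real.exp 1) + C)
    (α : Fin n → ℝ) (hUα : (U α).PosDef)
    (B : Matrix (Fin n) (Fin n) ℝ) (hB : B.PosDef)
    (θ : Fin m → ℝ) (δ : Fin n → ℝ)
    (hfeas : ∀ i, b i + a i ⬝ᵥ θ = φ i ⬝ᵥ B *ᵥ φ i + δ i) :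
    c ⬝ᵥ θ - lam * B.trace - lamθ * ∑ j, θ j ^ 2 - γ * ∑ i, δ i ^ 2
      + ε * Real.log B.det + C ≤ F α := by
  have hbarrier := hUα.mul_log_det_add_log_det_le_trace_mul hB hε
  have htrace : (U α * B).trace = lam * B.trace + ∑ i, α i * (φ i ⬝ᵥ B *ᵥ φ i) := by
    simp only [hU, add_mul, sum_mul, trace_add, trace_sum, smul_mul, trace_smul, one_mul,
      trace_vecMulVec_mul, smul_eq_mul]
  have hpairing : ∑ i, α i * (φ i ⬝ᵥ B *ᵥ φ i)
      = ∑ i, α i * b i + (α ᵥ* of a) ⬝ᵥ θ - α ⬝ᵥ δ := by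
    have hq (i : Fin n) :
        α i * (φ i ⬝ᵥ B *ᵥ φ i) = α i * b i + α i * (a i ⬝ᵥ θ) - α i * δ i := by
      rw [← mul_add, ← mul_sub, hfeas i, add_sub_cancel_right]
    simp only [hq, sum_sub_distrib, sum_add_distrib, ← dotProduct_mulVec]
    rfl
  have hθ := dotProduct_sub_mul_sum_sq_le hlamθ (fun j => c j + ∑ i, α i * a i j) θ
  have hθ_split : (fun j => c j + ∑ i, α i * a i j) ⬝ᵥ θ = c ⬝ᵥ θ + (α ᵥ* of a) ⬝ᵥ θ :=
    add_dotProduct _ _ _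
  have hδ : -(α ⬝ᵥ δ) - γ * ∑ i, δ i ^ 2 ≤ 1 / (4 * γ) * ∑ i, α i ^ 2 := by
    simpa only [neg_dotProduct, Pi.neg_apply, neg_sq] using dotProduct_sub_mul_sum_sq_le hγ (-α) δ
  rw [Fintype.card_fin, htrace, hpairing] at hbarrier
  rw [hF]
  linarith

/-- **Weak duality for the log-barrier SDP (Section V.B).** With
`U(α) = λ Iₙ + ∑ᵢ αᵢ φᵢφᵢᵀ` and dual objective
`F(α) = ∑ᵢ αᵢbᵢ + (1/4λ_θ) ∑ⱼ (cⱼ + ∑ᵢ αᵢ aᵢⱼ)² - ε log det U(α) + (1/4γ)‖α‖₂²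
  + ε n log(ε/e) + C`,
every primal-feasible triple `(B ≻ 0, θ, δ)` with `bᵢ + aᵢᵀθ = φᵢᵀBφᵢ + δᵢ` satisfies
`cᵀθ - λ Tr(B) - λ_θ‖θ‖₂² - γ‖δ‖₂² + ε log det B + C ≤ F(α)` whenever `U(α) ≻ 0`. -/
theorem statement_11 {n m : ℕ} (hn : 1 ≤ n) (hm : 1 ≤ m)
    (a : Fin n → Fin m → ℝ) (b : Fin n → ℝ) (c : Fin m → ℝ) (C : ℝ)
    (φ : Fin n → Fin n → ℝ)
    (lam lamθ γ ε : ℝ) (hlam : 0 < lam) (hlamθ : 0 < lamθ) (hγ : 0 < γ) (hε : 0 < ε)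
    (U : (Fin n → ℝ) → Matrix (Fin n) (Fin n) ℝ)
    (hU : ∀ α, U α = lam • (1 : Matrix (Fin n) (Fin n) ℝ)
      + ∑ i, α i • Matrix.vecMulVec (φ i) (φ i))
    (F : (Fin n → ℝ) → ℝ)
    (hF : ∀ α, F α = ∑ i, α i * b i
      + 1 / (4 * lamθ) * ∑ j, (c j + ∑ i, α i * a i j) ^ 2
      - ε * Real.log (U α).det + 1 / (4 * γ) * ∑ i, α i ^ 2
      + ε * n * Real.log (ε / Real.exp 1) + C)
    (α : Fin n → ℝ) (hUα : (U α).PosDef)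
    (B : Matrix (Fin n) (Fin n) ℝ) (hB : B.PosDef)
    (θ : Fin m → ℝ) (δ : Fin n → ℝ)
    (hfeas : ∀ i, b i + a i ⬝ᵥ θ = φ i ⬝ᵥ B *ᵥ φ i + δ i) :
    c ⬝ᵥ θ - lam * B.trace - lamθ * ∑ j, θ j ^ 2 - γ * ∑ i, δ i ^ 2
      + ε * Real.log B.det + C ≤ F α :=
  statement_11_general a b c C φ lam lamθ γ ε hlamθ hγ hε U hU F hF α hUα B hB θ δ hfeas
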